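/- Fix nonnegative integers m, c, k with m ≥ c+1. The number of words of length 2m-1 over the alphabet {M, D, U} having exactly k occurrences of M, m-c-1-k occurrences of D, m+c occurrences of U, and containing no occurrence of the consecutive pattern UD, equals binom(m-c-1, k) * binom(m+c+k, k). -/

import Mathlib

/-- The three-letter alphabet {M, D, U}. -/
inductive MDU : Type
  | M | D | U
deriving DecidableEq

open MDU

/-! Between two consecutive `M`s (or before the first, or after the last) a UD-free word cannot
have a `U` followed by a `D`, so each such block is `D^a U^b`. Hence a UD-free word is determined
by its subwords over `{M, D}` and over `{M, U}`, and every pair of such subwords with the same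
number `k` of `M`s occurs. With `d` letters `D` and `u` letters `U` this gives
`C(d + k, k) * C(u + k, k)` words; here `d = m - c - 1 - k` and `u = m + c`. -/

namespace List

variable {α : Type*} [DecidableEq α] {a b : α}

def twoLetterWords (a b : α) (i j : ℕ) : Set (List α) :=
  {w | (∀ x ∈ w, x = a ∨ x = b) ∧ w.count a = i ∧ w.count b = j}

theorem twoLetterWords_zero_left (hab : a ≠ b) (j : ℕ) :
    twoLetterWords a b 0 j = {replicate j b} := by
  ext w
  simp only [twoLetterWords, Set.mem_ofPred_eq, Set.mem_singleton_iff, eq_replicate_iff,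
    count_eq_zero]
  constructor
  · rintro ⟨hw, ha, rfl⟩
    have hb : ∀ x ∈ w, x = b := fun x hx => (hw x hx).resolve_left (by rintro rfl; exact ha hx)
    exact ⟨(count_eq_length.2 fun x hx => (hb x hx).symm).symm, hb⟩
  · rintro ⟨rfl, hb⟩
    exact ⟨fun x hx => .inr (hb x hx), fun ha => hab (hb a ha),
      count_eq_length.2 fun x hx => (hb x hx).symm⟩

theorem twoLetterWords_succ_succ (hab : a ≠ b) (i j : ℕ) :
    twoLetterWords a b (i + 1) (j + 1) =
      (a :: ·) '' twoLetterWords a b i (j + 1) ∪ (b :: ·) '' twoLetterWords a b (i + 1) j := by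
  ext (_ | ⟨x, t⟩)
  · simp [twoLetterWords]
  · simp only [twoLetterWords, Set.mem_union, Set.mem_image, Set.mem_ofPred_eq, cons.injEq,
      forall_mem_cons, count_cons, beq_iff_eq]
    constructor
    · rintro ⟨⟨hx | hx, ht⟩, hi, hj⟩ <;> subst hx
      · exact .inl ⟨t, ⟨ht, by simpa using hi, by simpa [hab] using hj⟩, rfl, rfl⟩
      · exact .inr ⟨t, ⟨ht, by simpa [hab.symm] using hi, by simpa using hj⟩, rfl, rfl⟩
    · rintro (⟨t, ⟨ht, hi, hj⟩, rfl, rfl⟩ | ⟨t, ⟨ht, hi, hj⟩, rfl, rfl⟩)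
      · simpa [hi, hj] using ⟨ht, hab⟩
      · simpa [hi, hj] using ⟨ht, hab.symm⟩

theorem twoLetterWords_comm (a b : α) (i j : ℕ) :
    twoLetterWords a b i j = twoLetterWords b a j i := by
  ext w
  simp only [twoLetterWords, Set.mem_ofPred_eq, or_comm, and_comm (a := w.count a = i)]

theorem encard_twoLetterWords (hab : a ≠ b) (i j : ℕ) :
    (twoLetterWords a b i j).encard = (i + j).choose i := by
  induction i generalizing j with
  | zero => simp [twoLetterWords_zero_left hab]
  | succ i ihi =>
    induction j with
    | zero => simp [twoLetterWords_comm a, twoLetterWords_zero_left hab.symm]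
    | succ j ihj =>
      rw [twoLetterWords_succ_succ hab, Set.encard_union_eq, cons_injective.encard_image,
        cons_injective.encard_image, ihi, ihj]
      · rw [← Nat.cast_add, show i + 1 + (j + 1) = (i + (j + 1)) + 1 by omega,
          Nat.choose_succ_succ', show i + 1 + j = i + (j + 1) by omega]
      · rw [Set.disjoint_left]
        rintro _ ⟨t, -, rfl⟩ ⟨t', -, h⟩
        exact hab (cons.inj h).1.symm

theorem card_twoLetterWords (hab : a ≠ b) (i j : ℕ) :
    Nat.card (twoLetterWords a b i j) = (i + j).choose i := by
  rw [Nat.card_coe_set_eq, Set.ncard_def, encard_twoLetterWords hab, ENat.toNat_natCast]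

end List

namespace MDU

theorem length_eq_count_add_count_add_count (w : List MDU) :
    w.length = w.count M + w.count D + w.count U := by
  induction w with
  | nil => rfl
  | cons x w ih => cases x <;> simp [ih] <;> omega

def IsUDFree : List MDU → Prop := List.IsChain fun x y => ¬(x = U ∧ y = D)

theorem isUDFree_cons {x : MDU} {w : List MDU} :
    IsUDFree (x :: w) ↔ (x = U → w.head? ≠ some D) ∧ IsUDFree w := by
  rcases w with _ | ⟨y, w⟩ <;> cases x <;> simp [IsUDFree, List.isChain_cons]

/-- Inverse of `w ↦ (w.filter (· ≠ U), w.filter (· ≠ D))` on UD-free words: between consecutive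
`M`s, the `D`s of `p` are placed before the `U`s of `q`. For `p` over `{M, D}` and `q` over
`{M, U}` with equally many `M`s, the last clause is reached only at `p = q = []`. -/
def interleave : List MDU → List MDU → List MDU
  | D :: p, q => D :: interleave p q
  | p, U :: q => U :: interleave p q
  | M :: p, M :: q => M :: interleave p q
  | _, _ => []
termination_by p q => p.length + q.length

theorem head?_interleave_ne_D {p : List MDU} (hp : ∀ p', p ≠ D :: p') (q : List MDU) :
    (interleave p q).head? ≠ some D := by
  fun_cases interleave p q
  · exact absurd rfl (hp _)
  all_goals simp

theorem isUDFree_interleave (p q : List MDU) : IsUDFree (interleave p q) := by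
  fun_induction interleave p q with
  | case1 p q ih => exact isUDFree_cons.2 ⟨nofun, ih⟩
  | case2 p q hp ih => exact isUDFree_cons.2 ⟨fun _ => head?_interleave_ne_D hp q, ih⟩
  | case3 p q ih => exact isUDFree_cons.2 ⟨nofun, ih⟩
  | case4 => exact List.isChain_nil

theorem filter_interleave {p q : List MDU} (hp : ∀ x ∈ p, x = M ∨ x = D)
    (hq : ∀ x ∈ q, x = M ∨ x = U) (hM : p.count M = q.count M) :
    (interleave p q).filter (· ≠ U) = p ∧ (interleave p q).filter (· ≠ D) = q := by
  fun_induction interleave p q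
  case case4 p q _ _ _ =>
    rcases p with _ | ⟨_ | _ | _, p⟩ <;> rcases q with _ | ⟨_ | _ | _, q⟩ <;> simp_all
  all_goals simp_all

theorem filter_ne_U_ne_D_cons {w : List MDU} (hw : IsUDFree (U :: w)) (p : List MDU) :
    w.filter (· ≠ U) ≠ D :: p := by
  induction w with
  | nil => simp
  | cons x w ih =>
    cases x <;> simp_all [isUDFree_cons]

theorem interleave_filter {w : List MDU} (hw : IsUDFree w) :
    interleave (w.filter (· ≠ U)) (w.filter (· ≠ D)) = w := by
  induction w with
  | nil => simp [interleave]
  | cons x w ih =>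
    have ih := ih (isUDFree_cons.1 hw).2
    cases x
    · simpa [interleave] using ih
    · simpa [interleave] using ih
    · rw [List.filter_cons_of_neg (by decide), List.filter_cons_of_pos (by decide),
        interleave.eq_2 _ _ (filter_ne_U_ne_D_cons hw), ih]

def udFreeWords (k d u : ℕ) : Set (List MDU) :=
  {w | w.count M = k ∧ w.count D = d ∧ w.count U = u ∧ IsUDFree w}

theorem filter_ne_U_mem_twoLetterWords {k d u : ℕ} {w : List MDU} (hw : w ∈ udFreeWords k d u) :
    w.filter (· ≠ U) ∈ List.twoLetterWords M D k d := by
  obtain ⟨hM, hD, -, -⟩ := hw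
  refine ⟨fun x hx => ?_, ?_, ?_⟩
  · cases x <;> simp_all
  · rwa [List.count_filter (by decide)]
  · rwa [List.count_filter (by decide)]

theorem filter_ne_D_mem_twoLetterWords {k d u : ℕ} {w : List MDU} (hw : w ∈ udFreeWords k d u) :
    w.filter (· ≠ D) ∈ List.twoLetterWords M U k u := by
  obtain ⟨hM, -, hU, -⟩ := hw
  refine ⟨fun x hx => ?_, ?_, ?_⟩
  · cases x <;> simp_all
  · rwa [List.count_filter (by decide)]
  · rwa [List.count_filter (by decide)]

theorem interleave_mem_udFreeWords {k d u : ℕ} {p q : List MDU} (hp : p ∈ List.twoLetterWords M D k d)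
    (hq : q ∈ List.twoLetterWords M U k u) : interleave p q ∈ udFreeWords k d u := by
  obtain ⟨hpMD, hpM, hpD⟩ := hp
  obtain ⟨hqMU, hqM, hqU⟩ := hq
  obtain ⟨hfp, hfq⟩ := filter_interleave hpMD hqMU (hpM.trans hqM.symm)
  refine ⟨?_, ?_, ?_, isUDFree_interleave p q⟩
  · rw [← List.count_filter (p := (· ≠ U)) (by decide), hfp, hpM]
  · rw [← List.count_filter (p := (· ≠ U)) (by decide), hfp, hpD]
  · rw [← List.count_filter (p := (· ≠ D)) (by decide), hfq, hqU]

def udFreeWordsEquiv (k d u : ℕ) :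
    udFreeWords k d u ≃ List.twoLetterWords M D k d × List.twoLetterWords M U k u where
  toFun w := (⟨_, filter_ne_U_mem_twoLetterWords w.2⟩, ⟨_, filter_ne_D_mem_twoLetterWords w.2⟩)
  invFun pq := ⟨_, interleave_mem_udFreeWords pq.1.2 pq.2.2⟩
  left_inv w := Subtype.ext (interleave_filter w.2.2.2.2)
  right_inv := fun ⟨⟨_, hpMD, hpM, _⟩, ⟨_, hqMU, hqM, _⟩⟩ =>
    have hfilter := filter_interleave hpMD hqMU (hpM.trans hqM.symm)
    Prod.ext (Subtype.ext hfilter.1) (Subtype.ext hfilter.2)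

theorem card_udFreeWords (k d u : ℕ) :
    Nat.card (udFreeWords k d u) = (k + d).choose k * (k + u).choose k := by
  rw [Nat.card_congr (udFreeWordsEquiv k d u), Nat.card_prod,
    List.card_twoLetterWords (by decide), List.card_twoLetterWords (by decide)]

end MDU

theorem stmt6 (m c k : ℕ) (hmc : c + 1 ≤ m) :
    Nat.card {w : List MDU //
        w.length + 1 = 2 * m ∧
        w.count M = k ∧ w.count D + c + 1 + k = m ∧ w.count U = m + c ∧
        List.Chain' (fun x y => ¬(x = U ∧ y = D)) w} =
      Nat.choose (m - c - 1) k * Nat.choose (m + c + k) k := by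
  by_cases hk : k + c + 1 ≤ m
  · rw [Nat.card_congr (Equiv.subtypeEquivRight (q := (· ∈ udFreeWords k (m - c - 1 - k) (m + c)))
      fun w => ?_), card_udFreeWords, show k + (m - c - 1 - k) = m - c - 1 by omega, add_comm k]
    have hlength := length_eq_count_add_count_add_count w
    constructor
    · rintro ⟨-, hM, hD, hU, hw⟩
      exact ⟨hM, by omega, hU, hw⟩
    · rintro ⟨hM, hD, hU, hw⟩
      exact ⟨by omega, hM, by omega, hU, hw⟩
  · rw [Nat.choose_eq_zero_of_lt (by omega), zero_mul, Nat.card_eq_zero]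
    exact .inl ⟨fun ⟨w, hw⟩ => hk (by omega)⟩
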